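/- arXiv:1711.06739 — 2 statements merged into one kernel-verified Lean document; each statement's English description precedes it below -/
import Mathlib

section
/- In the Birget–Rhodes expansion Γ(G), two elements (R,g) and (S,h) generate the same principal two-sided ideal if and only if (S,h) = (x⁻¹R, x⁻¹y) for some x,y ∈ R. -/
/-- The Birget–Rhodes expansion of a group `G`: pairs `(R, g)` where `R` is a
finite subset of `G` containing `1` and `g`. -/
def BR (G : Type*) [Group G] [DecidableEq G] : Type _ :=
  {p : Finset G × G // (1 : G) ∈ p.1 ∧ p.2 ∈ p.1}

variable {G : Type*} [Group G] [DecidableEq G]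

/-- Multiplication `(R,g)·(S,h) = (R ∪ gS, gh)`. -/
instance : Mul (BR G) :=
  ⟨fun x y =>
    ⟨(x.1.1 ∪ y.1.1.image (x.1.2 * ·), x.1.2 * y.1.2),
      Finset.mem_union_left _ x.2.1,
      Finset.mem_union_right _ (Finset.mem_image_of_mem _ y.2.2)⟩⟩

/-- The principal two-sided ideal generated by `s`:
`⟨s⟩ = {s} ∪ sΓ(G) ∪ Γ(G)s ∪ Γ(G)sΓ(G)`. -/
def princ (s : BR G) : Set (BR G) :=
  {t | t = s ∨ (∃ a, t = s * a) ∨ (∃ a, t = a * s) ∨ ∃ a b, t = a * s * b}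

/-!
An element `t = (T, h)` lies in `⟨s⟩`, `s = (S, g)`, exactly when some left translate `c • S` is
contained in `T`: each of `s`, `s * u`, `u * s`, `u * s * v` has first component containing `S` or
`u.2 • S`, and conversely `t = (T, c) * s * ({1, z}, z)` with `z = (c * g)⁻¹ * h`
(here `c = c • 1 ∈ T`, and the product only adds `c • S`, `c * g` and `h` to `T`).
Hence `⟨a⟩ = ⟨b⟩` forces translates of `A` and `B` into each other, which for finite sets means
`B = c • A`; the conditions `1 ∈ B` and `b.2 ∈ B` then say `c⁻¹ ∈ A` and `b.2 = c * y`, `y ∈ A`.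
-/

open Pointwise

lemma Finset.smul_finset_eq_of_smul_finset_subset {α β : Type*} [Group α] [MulAction α β]
    [DecidableEq β] {s t : Finset β} {c d : α} (hst : c • s ⊆ t) (hts : d • t ⊆ s) :
    c • s = t :=
  Finset.eq_of_subset_of_card_le hst <| calc
    t.card = (d • t).card := (Finset.card_smul_finset d t).symm
    _ ≤ s.card := Finset.card_le_card hts
    _ = (c • s).card := (Finset.card_smul_finset c s).symm

namespace BR

lemma ext {x y : BR G} (h₁ : x.1.1 = y.1.1) (h₂ : x.1.2 = y.1.2) : x = y :=
  Subtype.ext (Prod.ext h₁ h₂)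

lemma val_fst_subset_mul (x y : BR G) : x.1.1 ⊆ (x * y).1.1 :=
  Finset.subset_union_left

lemma smul_val_fst_subset_mul (x y : BR G) : x.1.2 • y.1.1 ⊆ (x * y).1.1 :=
  Finset.subset_union_right

lemma exists_smul_subset_of_mem_princ {s t : BR G} (ht : t ∈ princ s) :
    ∃ c : G, c • s.1.1 ⊆ t.1.1 := by
  rcases ht with rfl | ⟨u, rfl⟩ | ⟨u, rfl⟩ | ⟨u, v, rfl⟩
  · exact ⟨1, by rw [one_smul]⟩
  · exact ⟨1, by rw [one_smul]; exact val_fst_subset_mul s u⟩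
  · exact ⟨u.1.2, smul_val_fst_subset_mul u s⟩
  · exact ⟨u.1.2, (smul_val_fst_subset_mul u s).trans (val_fst_subset_mul _ v)⟩

lemma mem_princ_of_smul_subset {s t : BR G} {c : G} (hc : c • s.1.1 ⊆ t.1.1) : t ∈ princ s := by
  have hcg : c * s.1.2 ∈ t.1.1 := hc (Finset.smul_mem_smul_finset s.2.2)
  have hc1 : c ∈ t.1.1 := by simpa using hc (Finset.smul_mem_smul_finset s.2.1)
  set z := (c * s.1.2)⁻¹ * t.1.2
  refine Or.inr <| Or.inr <| Or.inr
    ⟨⟨(t.1.1, c), t.2.1, hc1⟩, ⟨({1, z}, z), by simp, by simp⟩, ?_⟩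
  have hz : c * s.1.2 * z = t.1.2 := mul_inv_cancel_left _ _
  have hpair : (c * s.1.2) • ({1, z} : Finset G) ⊆ t.1.1 := by
    rw [Finset.smul_finset_insert, Finset.smul_finset_singleton, smul_eq_mul, smul_eq_mul,
      mul_one, hz]
    exact Finset.insert_subset hcg (Finset.singleton_subset_iff.mpr t.2.2)
  refine ext ?_ hz.symm
  change t.1.1 = (t.1.1 ∪ c • s.1.1) ∪ (c * s.1.2) • ({1, z} : Finset G)
  rw [Finset.union_eq_left.mpr hc, Finset.union_eq_left.mpr hpair]

lemma mem_princ_iff {s t : BR G} : t ∈ princ s ↔ ∃ c : G, c • s.1.1 ⊆ t.1.1 :=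
  ⟨exists_smul_subset_of_mem_princ, fun ⟨_, hc⟩ => mem_princ_of_smul_subset hc⟩

lemma princ_eq_princ_iff {a b : BR G} : princ a = princ b ↔ ∃ c : G, c • a.1.1 = b.1.1 := by
  constructor
  · intro h
    obtain ⟨c, hc⟩ := mem_princ_iff.mp (h ▸ Or.inl rfl : b ∈ princ a)
    obtain ⟨d, hd⟩ := mem_princ_iff.mp (h.symm ▸ Or.inl rfl : a ∈ princ b)
    exact ⟨c, Finset.smul_finset_eq_of_smul_finset_subset hc hd⟩
  · rintro ⟨c, hc⟩
    ext t
    rw [mem_princ_iff, mem_princ_iff, ← hc]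
    exact ⟨fun ⟨e, he⟩ => ⟨e * c⁻¹, by rwa [smul_smul, inv_mul_cancel_right]⟩,
      fun ⟨e, he⟩ => ⟨e * c, by rwa [smul_smul] at he⟩⟩

end BR

/-- `⟨(R,g)⟩ = ⟨(S,h)⟩` iff `(S,h) = (x⁻¹R, x⁻¹y)` for some `x, y ∈ R`. -/
theorem princ_eq_iff (a b : BR G) :
    princ a = princ b ↔
      ∃ x ∈ a.1.1, ∃ y ∈ a.1.1,
        b.1.1 = a.1.1.image (x⁻¹ * ·) ∧ b.1.2 = x⁻¹ * y := by
  change _ ↔ ∃ x ∈ a.1.1, ∃ y ∈ a.1.1, b.1.1 = x⁻¹ • a.1.1 ∧ b.1.2 = x⁻¹ * y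
  rw [BR.princ_eq_princ_iff]
  constructor
  · rintro ⟨c, hc⟩
    obtain ⟨x, hx, hcx⟩ := Finset.mem_smul_finset.mp (hc ▸ b.2.1 : (1 : G) ∈ c • a.1.1)
    obtain ⟨y, hy, hcy⟩ := Finset.mem_smul_finset.mp (hc ▸ b.2.2 : b.1.2 ∈ c • a.1.1)
    have hxc : x⁻¹ = c := inv_eq_of_mul_eq_one_left hcx
    exact ⟨x, hx, y, hy, hxc ▸ hc.symm, hxc ▸ hcy.symm⟩
  · rintro ⟨x, -, -, -, hb, -⟩
    exact ⟨x⁻¹, hb.symm⟩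
end

section
/- Let G be a group, I an ideal of Γ(G) containing N₃, A an abelian group, and σ ∈ pZ²(G,A). Then the set E = (A × (Γ(G) \ I)) ∪ {∞} with multiplication (λ,R,x)·(μ,S,y) = (λ+μ+σ(x,y), R∪xS, xy) if (R∪xS, xy) ∉ I, and ∞ otherwise, is an associative semigroup. -/
variable {G : Type*} [Group G] [DecidableEq G]

/-- A two-sided ideal of the Birget–Rhodes expansion. -/
def IsIdeal (I : Set (BR G)) : Prop :=
  ∀ a ∈ I, ∀ s : BR G, s * a ∈ I ∧ a * s ∈ I

/-- The ideal `N₃ = {(R,g) : |R| ≥ 4}`. -/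
def N3 (G : Type*) [Group G] [DecidableEq G] : Set (BR G) :=
  {x : BR G | 4 ≤ x.1.1.card}

variable {A : Type*} [AddCommGroup A]

/-- The coboundary `δ²σ(x,y,z) = σ(y,z) − σ(xy,z) + σ(x,yz) − σ(x,y)`. -/
def d2 (σ : G → G → A) (x y z : G) : A :=
  σ y z - σ (x * y) z + σ x (y * z) - σ x y

/-- A pre-cocycle: `δ²σ(x,y,z) = 0` whenever `1 ∈ {x,y,z,xy,yz,xyz}`. -/
def IsPreCocycle (σ : G → G → A) : Prop :=
  ∀ x y z : G, (1 : G) ∈ ({x, y, z, x * y, y * z, x * y * z} : Set G) →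
    d2 σ x y z = 0

/-- The underlying set `E = (A × (Γ(G) \ I)) ∪ {∞}`, with `none` playing the
role of the zero element `∞`. -/
def Esg (A : Type*) (G : Type*) [Group G] [DecidableEq G] (I : Set (BR G)) :
    Type _ :=
  Option (A × {x : BR G // x ∉ I})

open Classical in
/-- The multiplication `(λ,R,x)·(μ,S,y) = (λ+μ+σ(x,y), R∪xS, xy)` if
`(R∪xS, xy) ∉ I`, and `∞` otherwise. -/
noncomputable def Emul (σ : G → G → A) (I : Set (BR G)) :
    Esg A G I → Esg A G I → Esg A G I
  | some (a, x), some (b, y) =>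
      if h : (x.1 * y.1) ∈ I then none
      else some (a + b + σ x.1.1.2 y.1.1.2, ⟨x.1 * y.1, h⟩)
  | _, _ => none

/-! The `Γ(G)`-component of a product in `E` is the product in the semigroup `Γ(G)`, and a
product lands in `∞` exactly when its `Γ(G)`-component lies in `I`; since `I` is an ideal, this
is the same for both bracketings. When `(R, xyz) ∉ I`, also `(R, xyz) ∉ N₃`, so `|R| ≤ 3`; as
`R ⊇ {1, x, xy, xyz}`, one of `x, y, z, xy, yz, xyz` is `1`, and then the pre-cocycle condition
gives exactly the cocycle identity needed to match the `A`-components. -/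

namespace BR

@[simp]
lemma fst_mul (x y : BR G) : (x * y).1.1 = x.1.1 ∪ y.1.1.image (x.1.2 * ·) := rfl

@[simp]
lemma snd_mul (x y : BR G) : (x * y).1.2 = x.1.2 * y.1.2 := rfl

protected lemma mul_assoc (x y z : BR G) : x * y * z = x * (y * z) := by
  refine Subtype.ext (Prod.ext ?_ (_root_.mul_assoc _ _ _))
  simp only [fst_mul, snd_mul, Finset.image_union, Finset.image_image, Finset.union_assoc,
    Function.comp_def, _root_.mul_assoc]

lemma prefixes_subset_fst_mul_mul (x y z : BR G) :
    ({1, x.1.2, x.1.2 * y.1.2, x.1.2 * y.1.2 * z.1.2} : Finset G) ⊆ (x * y * z).1.1 := by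
  intro g hg
  simp only [Finset.mem_insert, Finset.mem_singleton] at hg
  rcases hg with rfl | rfl | rfl | rfl
  · exact (x * y * z).2.1
  · simp only [fst_mul, snd_mul, Finset.mem_union, Finset.mem_image]
    exact Or.inl (Or.inr ⟨1, y.2.1, mul_one _⟩)
  · simp only [fst_mul, snd_mul, Finset.mem_union, Finset.mem_image]
    exact Or.inl (Or.inr ⟨_, y.2.2, rfl⟩)
  · exact (x * y * z).2.2

end BR

lemma card_prefixes_eq_four {g h k : G}
    (hone : (1 : G) ∉ ({g, h, k, g * h, h * k, g * h * k} : Set G)) :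
    ({1, g, g * h, g * h * k} : Finset G).card = 4 := by
  simp only [Set.mem_insert_iff, Set.mem_singleton_iff, not_or] at hone
  obtain ⟨hg, hh, hk, hgh, hhk, hghk⟩ := hone
  rw [Finset.card_insert_of_notMem, Finset.card_insert_of_notMem,
    Finset.card_insert_of_notMem, Finset.card_singleton]
  · simp [_root_.mul_assoc, Ne.symm hk]
  · simp [_root_.mul_assoc, Ne.symm hh, Ne.symm hhk]
  · simpa using ⟨hg, hgh, hghk⟩

lemma IsPreCocycle.cocycle_of_notMem_N3 {σ : G → G → A} (hσ : IsPreCocycle σ) {x y z : BR G}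
    (h : x * y * z ∉ N3 G) :
    σ x.1.2 y.1.2 + σ (x.1.2 * y.1.2) z.1.2 = σ y.1.2 z.1.2 + σ x.1.2 (y.1.2 * z.1.2) := by
  have hone : (1 : G) ∈ ({x.1.2, y.1.2, z.1.2, x.1.2 * y.1.2, y.1.2 * z.1.2,
      x.1.2 * y.1.2 * z.1.2} : Set G) := by
    by_contra hone
    exact h ((card_prefixes_eq_four hone).symm.le.trans
      (Finset.card_le_card (BR.prefixes_subset_fst_mul_mul x y z)))
  rw [← sub_eq_zero, ← neg_eq_zero.mpr (hσ _ _ _ hone), d2]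
  abel

section Emul

variable {σ : G → G → A} {I : Set (BR G)}

lemma Emul_none_right (u : Esg A G I) : Emul σ I u none = none := by
  cases u <;> rfl

lemma Emul_some_of_mem {a b : A} {x y : {x : BR G // x ∉ I}} (h : x.1 * y.1 ∈ I) :
    Emul σ I (some (a, x)) (some (b, y)) = none :=
  dif_pos h

lemma Emul_some_of_notMem {a b : A} {x y : {x : BR G // x ∉ I}} (h : x.1 * y.1 ∉ I) :
    Emul σ I (some (a, x)) (some (b, y)) = some (a + b + σ x.1.1.2 y.1.1.2, ⟨x.1 * y.1, h⟩) :=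
  dif_neg h

variable {a b c : A} {x y z : {x : BR G // x ∉ I}}

lemma Emul_Emul_some_of_mem (h : x.1 * y.1 * z.1 ∈ I) :
    Emul σ I (Emul σ I (some (a, x)) (some (b, y))) (some (c, z)) = none := by
  by_cases hxy : x.1 * y.1 ∈ I
  · rw [Emul_some_of_mem hxy]
    rfl
  · rw [Emul_some_of_notMem hxy, Emul_some_of_mem h]

lemma Emul_some_Emul_of_mem (h : x.1 * (y.1 * z.1) ∈ I) :
    Emul σ I (some (a, x)) (Emul σ I (some (b, y)) (some (c, z))) = none := by
  by_cases hyz : y.1 * z.1 ∈ I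
  · rw [Emul_some_of_mem hyz]
    exact Emul_none_right _
  · rw [Emul_some_of_notMem hyz, Emul_some_of_mem h]

lemma Emul_Emul_some_of_notMem (hI : IsIdeal I) (h : x.1 * y.1 * z.1 ∉ I) :
    Emul σ I (Emul σ I (some (a, x)) (some (b, y))) (some (c, z)) =
      some (a + b + σ x.1.1.2 y.1.1.2 + c + σ (x.1.1.2 * y.1.1.2) z.1.1.2, ⟨_, h⟩) := by
  have hxy : x.1 * y.1 ∉ I := fun hxy ↦ h ((hI _ hxy z.1).2)
  rw [Emul_some_of_notMem hxy, Emul_some_of_notMem h]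
  rfl

lemma Emul_some_Emul_of_notMem (hI : IsIdeal I) (h : x.1 * (y.1 * z.1) ∉ I) :
    Emul σ I (some (a, x)) (Emul σ I (some (b, y)) (some (c, z))) =
      some (a + (b + c + σ y.1.1.2 z.1.1.2) + σ x.1.1.2 (y.1.1.2 * z.1.1.2), ⟨_, h⟩) := by
  have hyz : y.1 * z.1 ∉ I := fun hyz ↦ h ((hI _ hyz x.1).1)
  rw [Emul_some_of_notMem hyz, Emul_some_of_notMem h]
  rfl

end Emul

theorem Emul_assoc_general (σ : G → G → A) (hσ : IsPreCocycle σ) (I : Set (BR G))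
    (hI : IsIdeal I) (hN : N3 G ⊆ I)
    (a b c : Esg A G I) :
    Emul σ I (Emul σ I a b) c = Emul σ I a (Emul σ I b c) := by
  rcases a with _ | ⟨a, x⟩
  · rfl
  rcases b with _ | ⟨b, y⟩
  · rfl
  rcases c with _ | ⟨c, z⟩
  · exact Emul_none_right _
  by_cases h : x.1 * y.1 * z.1 ∈ I
  · rw [Emul_Emul_some_of_mem h, Emul_some_Emul_of_mem (BR.mul_assoc x.1 y.1 z.1 ▸ h)]
  · have h' : x.1 * (y.1 * z.1) ∉ I := BR.mul_assoc x.1 y.1 z.1 ▸ h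
    rw [Emul_Emul_some_of_notMem hI h, Emul_some_Emul_of_notMem hI h']
    have hσxyz := hσ.cocycle_of_notMem_N3 (fun hN3 ↦ h (hN hN3))
    congr 2
    · linear_combination (norm := abel) hσxyz
    · exact Subtype.ext (BR.mul_assoc x.1 y.1 z.1)

/-- `E` with the above multiplication is an associative semigroup. -/
theorem Emul_assoc (σ : G → G → A) (hσ : IsPreCocycle σ) (I : Set (BR G))
    (hI : IsIdeal I) (hN : N3 G ⊆ I) (hne : I ≠ Set.univ)
    (a b c : Esg A G I) :
    Emul σ I (Emul σ I a b) c = Emul σ I a (Emul σ I b c) :=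
  Emul_assoc_general σ hσ I hI hN a b c
end
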